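/- The Maurer–Cartan forms of the extended model group satisfy the structure equations: dΦ₀ = 0, dΦₓ = Φₓ∧Φ₀, dΦ_y = Φ_y∧Φ₀, dΦ₂ = 2·Φ₂∧Φ₀ − Φₓ∧Φ_y, and dΦ₃ = 3·Φ₃∧Φ₀ − Φₓ∧Φ₂, as identities of 2-forms at every point of U = ℝ⁴ × (ℝ∖{0}). -/

import Mathlib

/-!
Each form is `Φ = t⁻ᵏ θ` with `θ` free of `t`, of weight `k = 1, 1, 1, 2, 3`. Since
`d(t⁻ᵏ) = -k t⁻ᵏ Φ₀`, the Leibniz rule gives `dΦ = k Φ∧Φ₀ + t⁻ᵏ dθ`. The numerators of `Φ₀`, `Φₓ`,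
`Φ_y` are constant, while `dθ₂ = 4 dx∧dy = -t² Φₓ∧Φ_y` and
`dθ₃ = -2 dx∧du₁ - 4x dx∧dy = -t³ Φₓ∧Φ₂`.
-/

/-- The coordinate 1-form `dxᵢ` on `ℝ⁵`, as a continuous linear map. -/
noncomputable def dcoord (i : Fin 5) : (Fin 5 → ℝ) →L[ℝ] ℝ :=
  ContinuousLinearMap.proj i

/-- `Φ₀ = dt/t` (coordinates `(x,y,u₁,u₂,t) = (a 0, a 1, a 2, a 3, a 4)`). -/
noncomputable def Phi0 : (Fin 5 → ℝ) → ((Fin 5 → ℝ) →L[ℝ] ℝ) :=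
  fun a => (a 4)⁻¹ • dcoord 4

/-- `Φₓ = 2dx/t`. -/
noncomputable def Phix : (Fin 5 → ℝ) → ((Fin 5 → ℝ) →L[ℝ] ℝ) :=
  fun a => (2 / a 4) • dcoord 0

/-- `Φ_y = −2dy/t`. -/
noncomputable def Phiy : (Fin 5 → ℝ) → ((Fin 5 → ℝ) →L[ℝ] ℝ) :=
  fun a => (-2 / a 4) • dcoord 1

/-- `Φ₂ = (du₁ − 2y dx + 2x dy)/t²`. -/
noncomputable def Phi2 : (Fin 5 → ℝ) → ((Fin 5 → ℝ) →L[ℝ] ℝ) :=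
  fun a => ((a 4) ^ 2)⁻¹ • (dcoord 2 - (2 * a 1) • dcoord 0 + (2 * a 0) • dcoord 1)

/-- `Φ₃ = (du₂ − 2x du₁ + 2xy dx − (x²−y²) dy)/t³`. -/
noncomputable def Phi3 : (Fin 5 → ℝ) → ((Fin 5 → ℝ) →L[ℝ] ℝ) :=
  fun a => ((a 4) ^ 3)⁻¹ •
    (dcoord 3 - (2 * a 0) • dcoord 2 + (2 * a 0 * a 1) • dcoord 0
      - ((a 0) ^ 2 - (a 1) ^ 2) • dcoord 1)

/-- The exterior derivative of a 1-form: `dω(a)(u,v) = Dω(a)(u)(v) − Dω(a)(v)(u)`. -/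
noncomputable def extDer (ω : (Fin 5 → ℝ) → ((Fin 5 → ℝ) →L[ℝ] ℝ))
    (a u v : Fin 5 → ℝ) : ℝ :=
  fderiv ℝ ω a u v - fderiv ℝ ω a v u

/-- The wedge of two 1-forms: `(α∧β)(a)(u,v) = α(a)(u)·β(a)(v) − α(a)(v)·β(a)(u)`. -/
noncomputable def wedge (α β : (Fin 5 → ℝ) → ((Fin 5 → ℝ) →L[ℝ] ℝ))
    (a u v : Fin 5 → ℝ) : ℝ :=
  α a u * β a v - α a v * β a u

section ExteriorCalculus

variable {a u v : Fin 5 → ℝ} {α β θ : (Fin 5 → ℝ) → (Fin 5 → ℝ) →L[ℝ] ℝ}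
  {g : (Fin 5 → ℝ) → ℝ}

theorem wedge_self : wedge α α a u v = 0 := by
  unfold wedge
  ring

theorem extDer_const (L : (Fin 5 → ℝ) →L[ℝ] ℝ) : extDer (fun _ => L) a u v = 0 := by
  simp [extDer]

theorem extDer_add (hα : DifferentiableAt ℝ α a) (hβ : DifferentiableAt ℝ β a) :
    extDer (fun b => α b + β b) a u v = extDer α a u v + extDer β a u v := by
  simp only [extDer, fderiv_fun_add hα hβ, add_apply]
  ring

theorem extDer_sub (hα : DifferentiableAt ℝ α a) (hβ : DifferentiableAt ℝ β a) :
    extDer (fun b => α b - β b) a u v = extDer α a u v - extDer β a u v := by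
  simp only [extDer, fderiv_fun_sub hα hβ, sub_apply]
  ring

theorem extDer_smul (hg : DifferentiableAt ℝ g a) (hθ : DifferentiableAt ℝ θ a) :
    extDer (fun b => g b • θ b) a u v = wedge (fderiv ℝ g) θ a u v + g a * extDer θ a u v := by
  simp only [extDer, wedge, fderiv_fun_smul hg hθ, add_apply,
    smul_apply, ContinuousLinearMap.smulRight_apply, smul_eq_mul]
  ring

theorem extDer_smul_const (hg : DifferentiableAt ℝ g a) (L : (Fin 5 → ℝ) →L[ℝ] ℝ) :
    extDer (fun b => g b • L) a u v = fderiv ℝ g a u * L v - fderiv ℝ g a v * L u := by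
  rw [extDer_smul hg (differentiableAt_const L), extDer_const, wedge]
  ring

end ExteriorCalculus

section Weights

variable {a u v : Fin 5 → ℝ} {θ : (Fin 5 → ℝ) → (Fin 5 → ℝ) →L[ℝ] ℝ}

theorem fderiv_inv_pow_apply_four (k : ℕ) (ha : a 4 ≠ 0) :
    fderiv ℝ (fun b : Fin 5 → ℝ => (b 4 ^ k)⁻¹) a = (-k * (a 4 ^ k)⁻¹) • Phi0 a := by
  have h : HasFDerivAt (fun b : Fin 5 → ℝ => (b 4 ^ k)⁻¹)
      ((-(k * a 4 ^ (k - 1)) / (a 4 ^ k) ^ 2) • dcoord 4) a :=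
    ((hasDerivAt_pow k (a 4)).inv (pow_ne_zero k ha)).comp_hasFDerivAt
      (f := fun b : Fin 5 → ℝ => b 4) a (dcoord 4).hasFDerivAt
  rw [h.fderiv, Phi0, smul_smul]
  congr 1
  -- `hasDerivAt_pow` is stated with the truncated exponent `k - 1`
  rcases k with _ | k
  · simp
  · rw [Nat.add_sub_cancel]
    field_simp
    ring

theorem extDer_inv_pow_smul (k : ℕ) (ha : a 4 ≠ 0) (hθ : DifferentiableAt ℝ θ a) :
    extDer (fun b => (b 4 ^ k)⁻¹ • θ b) a u v =
      k * wedge (fun b => (b 4 ^ k)⁻¹ • θ b) Phi0 a u v + (a 4 ^ k)⁻¹ * extDer θ a u v := by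
  have hg : DifferentiableAt ℝ (fun b : Fin 5 → ℝ => (b 4 ^ k)⁻¹) a :=
    ((differentiableAt_apply 4 a).pow k).inv (pow_ne_zero k ha)
  rw [extDer_smul hg hθ]
  simp only [wedge, fderiv_inv_pow_apply_four k ha, smul_apply, smul_eq_mul]
  ring

end Weights

noncomputable def theta2 : (Fin 5 → ℝ) → ((Fin 5 → ℝ) →L[ℝ] ℝ) :=
  fun a => dcoord 2 - (2 * a 1) • dcoord 0 + (2 * a 0) • dcoord 1

noncomputable def theta3 : (Fin 5 → ℝ) → ((Fin 5 → ℝ) →L[ℝ] ℝ) :=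
  fun a => dcoord 3 - (2 * a 0) • dcoord 2 + (2 * a 0 * a 1) • dcoord 0
    - ((a 0) ^ 2 - (a 1) ^ 2) • dcoord 1

theorem Phi2_eq_smul_theta2 : Phi2 = fun b => (b 4 ^ 2)⁻¹ • theta2 b := rfl

theorem Phi3_eq_smul_theta3 : Phi3 = fun b => (b 4 ^ 3)⁻¹ • theta3 b := rfl

section Numerators

variable {a u v : Fin 5 → ℝ}

theorem differentiableAt_theta2 : DifferentiableAt ℝ theta2 a := by
  unfold theta2
  fun_prop

theorem differentiableAt_theta3 : DifferentiableAt ℝ theta3 a := by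
  unfold theta3
  fun_prop

theorem extDer_theta2 : extDer theta2 a u v = 4 * (u 0 * v 1 - v 0 * u 1) := by
  unfold theta2
  simp (disch := fun_prop) only [extDer_add, extDer_sub, extDer_smul_const, extDer_const]
  simp (disch := fun_prop) [fderiv_const_mul, fderiv_apply, dcoord]
  ring

theorem extDer_theta3 :
    extDer theta3 a u v = -2 * (u 0 * v 2 - v 0 * u 2) - 4 * a 0 * (u 0 * v 1 - v 0 * u 1) := by
  unfold theta3
  simp (disch := fun_prop) only [extDer_add, extDer_sub, extDer_smul_const, extDer_const]
  simp (disch := fun_prop) [fderiv_fun_mul, fderiv_fun_sub, fderiv_fun_pow, fderiv_apply, dcoord]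
  ring

end Numerators

section StructureEquations

variable {a u v : Fin 5 → ℝ}

theorem Phi0_eq_smul : Phi0 = fun b => (b 4 ^ 1)⁻¹ • dcoord 4 := by
  funext b
  rw [Phi0, pow_one]

theorem Phix_eq_smul : Phix = fun b => (b 4 ^ 1)⁻¹ • (2 : ℝ) • dcoord 0 := by
  funext b
  rw [Phix, pow_one, smul_smul, div_eq_inv_mul]

theorem Phiy_eq_smul : Phiy = fun b => (b 4 ^ 1)⁻¹ • (-2 : ℝ) • dcoord 1 := by
  funext b
  rw [Phiy, pow_one, smul_smul, div_eq_inv_mul]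

theorem extDer_Phi0 (ha : a 4 ≠ 0) : extDer Phi0 a u v = 0 := by
  rw [Phi0_eq_smul, extDer_inv_pow_smul 1 ha (differentiableAt_const _), ← Phi0_eq_smul,
    wedge_self, extDer_const]
  ring

theorem extDer_Phix (ha : a 4 ≠ 0) : extDer Phix a u v = wedge Phix Phi0 a u v := by
  rw [Phix_eq_smul, extDer_inv_pow_smul 1 ha (differentiableAt_const _), ← Phix_eq_smul,
    extDer_const]
  ring

theorem extDer_Phiy (ha : a 4 ≠ 0) : extDer Phiy a u v = wedge Phiy Phi0 a u v := by
  rw [Phiy_eq_smul, extDer_inv_pow_smul 1 ha (differentiableAt_const _), ← Phiy_eq_smul,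
    extDer_const]
  ring

theorem extDer_Phi2 (ha : a 4 ≠ 0) :
    extDer Phi2 a u v = 2 * wedge Phi2 Phi0 a u v - wedge Phix Phiy a u v := by
  rw [Phi2_eq_smul_theta2, extDer_inv_pow_smul 2 ha differentiableAt_theta2,
    ← Phi2_eq_smul_theta2, extDer_theta2]
  simp only [wedge, Phix, Phiy, dcoord, smul_apply, ContinuousLinearMap.proj_apply, smul_eq_mul]
  field_simp
  ring

theorem extDer_Phi3 (ha : a 4 ≠ 0) :
    extDer Phi3 a u v = 3 * wedge Phi3 Phi0 a u v - wedge Phix Phi2 a u v := by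
  rw [Phi3_eq_smul_theta3, extDer_inv_pow_smul 3 ha differentiableAt_theta3,
    ← Phi3_eq_smul_theta3, extDer_theta3]
  simp only [wedge, Phix, Phi2, dcoord, smul_apply, add_apply, sub_apply,
    ContinuousLinearMap.proj_apply, smul_eq_mul]
  field_simp
  ring

end StructureEquations

/-- The structure equations of the Maurer–Cartan forms of the extended model group. -/
theorem stmt_13 :
    ∀ a : Fin 5 → ℝ, a 4 ≠ 0 → ∀ u v : Fin 5 → ℝ,
      extDer Phi0 a u v = 0 ∧
      extDer Phix a u v = wedge Phix Phi0 a u v ∧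
      extDer Phiy a u v = wedge Phiy Phi0 a u v ∧
      extDer Phi2 a u v = 2 * wedge Phi2 Phi0 a u v - wedge Phix Phiy a u v ∧
      extDer Phi3 a u v = 3 * wedge Phi3 Phi0 a u v - wedge Phix Phi2 a u v :=
  fun _ ha _ _ =>
    ⟨extDer_Phi0 ha, extDer_Phix ha, extDer_Phiy ha, extDer_Phi2 ha, extDer_Phi3 ha⟩
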